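/- arXiv:2405.01915 — 5 statements merged into one kernel-verified Lean document; each statement's English description precedes it below -/
import Mathlib

section
/- A sequence of pickup and delivery events (each order appearing exactly once as a pickup and exactly once later as a delivery) satisfies the non-crossing LIFO condition — for all orders i, j with pos(i⁺) < pos(j⁺), either pos(i⁻) ≤ pos(j⁺) or pos(j⁻) ≤ pos(i⁻) — if and only if it can be executed by a stack in which each delivery removes exactly the order currently on top of the stack. -/
/-- Processing events left to right with a stack: a pickup `(o, true)` pushes `o`,
a delivery `(o, false)` is permitted only when `o` is on top of the stack, and pops it. -/
def stackRun {α : Type*} [DecidableEq α] : List (α × Bool) → List α → Option (List α)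
  | [], s => some s
  | (o, true) :: rest, s => stackRun rest (o :: s)
  | (o, false) :: rest, s =>
      match s with
      | [] => none
      | topo :: s' => if topo = o then stackRun rest s' else none

/-!
A stack execution that starts from `o :: s` and ends with the empty stack splits the events as
`A ++ o⁻ :: B`, where every order picked up in `A` is also delivered in `A`. Hence an order `j`
picked up between `i⁺` and `i⁻` is delivered before `i⁻`: no crossing. Conversely, if a
non-crossing route starts with `o⁺`, the events strictly between `o⁺` and `o⁻` and those after
`o⁻` are again non-crossing routes, and by induction the stack runs through each of them
returning to its initial contents.

Precedence is expressed by two-element sublists rather than by indices, so that the conditions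
pass to sublists; when every event occurs once, `idxOf x < idxOf y` iff `[x, y] <+ l`.
-/

namespace List
variable {β : Type*} {x y : β}

theorem pair_sublist_append {A B : List β} (hx : x ∈ A) (hy : y ∈ B) : [x, y] <+ A ++ B := by
  simpa using (singleton_sublist.2 hx).append (singleton_sublist.2 hy)

theorem pair_sublist_append_cons {z : β} (A : List β) {B : List β} (hy : y ∈ B) :
    [z, y] <+ A ++ z :: B :=
  (cons_sublist_cons.2 (singleton_sublist.2 hy)).trans (sublist_append_right _ _)

variable [BEq β] [LawfulBEq β]

theorem pair_sublist_of_idxOf_lt {l : List β} (hy : y ∈ l) (h : l.idxOf x < l.idxOf y) :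
    [x, y] <+ l := by
  induction l with
  | nil => simp at hy
  | cons a t ih =>
    by_cases hax : a = x
    · subst hax
      have : y ≠ a := by rintro rfl; simp at h
      simpa [cons_sublist_cons, this] using hy
    · by_cases hay : a = y
      · subst hay; simp at h
      · simp only [idxOf_cons_ne _ hax, idxOf_cons_ne _ hay] at h
        exact (ih (by simpa [Ne.symm hay] using hy) (by omega)).cons a

theorem Nodup.idxOf_lt_of_pair_sublist {l : List β} (hl : l.Nodup) (h : [x, y] <+ l) :
    l.idxOf x < l.idxOf y := by
  induction l with
  | nil => simp at h
  | cons a t ih =>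
    rw [nodup_cons] at hl
    rcases sublist_cons_iff.1 h with h | ⟨r, hr, hrt⟩
    · have hx : a ≠ x := fun hax => hl.1 (hax ▸ h.subset (by simp))
      have hy : a ≠ y := fun hay => hl.1 (hay ▸ h.subset (by simp))
      simp only [idxOf_cons_ne _ hx, idxOf_cons_ne _ hy]
      exact Nat.succ_lt_succ (ih hl.2 h)
    · obtain ⟨rfl, rfl⟩ := cons_eq_cons.1 hr
      have hy : x ≠ y := fun hxy => hl.1 (hxy ▸ hrt.subset (by simp))
      simp [idxOf_cons_ne _ hy]

theorem Nodup.idxOf_lt_idxOf_iff {l : List β} (hl : l.Nodup) (hy : y ∈ l) :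
    l.idxOf x < l.idxOf y ↔ [x, y] <+ l :=
  ⟨pair_sublist_of_idxOf_lt hy, hl.idxOf_lt_of_pair_sublist⟩

theorem Nodup.not_pair_sublist_swap {l : List β} (hl : l.Nodup) (h : [x, y] <+ l) :
    ¬[y, x] <+ l := fun h' =>
  lt_asymm (hl.idxOf_lt_of_pair_sublist h) (hl.idxOf_lt_of_pair_sublist h')

end List

open List

section

variable {α : Type*}

/-- Orders `i` and `j` interleave as `i⁺ j⁺ i⁻ j⁻`. -/
def Crossing (l : List (α × Bool)) (i j : α) : Prop :=
  [(i, true), (j, true)] <+ l ∧ [(j, true), (i, false)] <+ l ∧ [(i, false), (j, false)] <+ l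

structure WellNested (l : List (α × Bool)) : Prop where
  nodup : l.Nodup
  pickup_mem_iff : ∀ o, (o, true) ∈ l ↔ (o, false) ∈ l
  not_delivery_before_pickup : ∀ o, ¬[(o, false), (o, true)] <+ l
  not_crossing : ∀ i j, ¬Crossing l i j

namespace WellNested

theorem of_sublist {l l' : List (α × Bool)} (h : WellNested l) (hl' : l' <+ l)
    (hpair : ∀ o, (o, true) ∈ l' ↔ (o, false) ∈ l') : WellNested l' where
  nodup := h.nodup.sublist hl'
  pickup_mem_iff := hpair
  not_delivery_before_pickup o h' := h.not_delivery_before_pickup o (h'.trans hl')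
  not_crossing i j h' :=
    h.not_crossing i j ⟨h'.1.trans hl', h'.2.1.trans hl', h'.2.2.trans hl'⟩

theorem exists_split {o : α} {rest : List (α × Bool)} (h : WellNested ((o, true) :: rest)) :
    ∃ M R, rest = M ++ (o, false) :: R ∧ WellNested M ∧ WellNested R := by
  have hof : (o, false) ∈ rest := by
    simpa using (h.pickup_mem_iff o).1 mem_cons_self
  obtain ⟨M, R, rfl⟩ := append_of_mem hof
  obtain ⟨hot, hnd⟩ := nodup_cons.1 h.nodup
  have hof : (o, false) ∉ M ++ R := (nodup_cons.1 (nodup_middle.1 hnd)).1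
  simp only [mem_append, mem_cons, not_or] at hot hof
  have hsplit : ∀ j b, j ≠ o → (j, b) ∈ (o, true) :: (M ++ (o, false) :: R) →
      (j, b) ∈ M ∨ (j, b) ∈ R := by
    intro j b hj hjb
    simpa [hj] using hjb
  have hcross : ∀ j, (j, true) ∈ M → (j, false) ∉ R := fun j hM hR =>
    h.not_crossing o j ⟨cons_sublist_cons.2 (singleton_sublist.2 (mem_append_left _ hM)),
      (pair_sublist_append hM mem_cons_self).cons _, (pair_sublist_append_cons M hR).cons _⟩
  have hord : ∀ j, (j, false) ∈ M → (j, true) ∉ R := fun j hM hR =>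
    h.not_delivery_before_pickup j ((pair_sublist_append hM (mem_cons_of_mem _ hR)).cons _)
  have hpair := h.pickup_mem_iff
  refine ⟨M, R, rfl,
    h.of_sublist ((sublist_append_left _ _).cons _) fun j => ⟨fun hj => ?_, fun hj => ?_⟩,
    h.of_sublist (((sublist_cons_self _ _).trans (sublist_append_right _ _)).cons _)
      fun j => ⟨fun hj => ?_, fun hj => ?_⟩⟩
  · have hjo : j ≠ o := by rintro rfl; exact hot.1 hj
    exact (hsplit j false hjo ((hpair j).1 (by simp [hj]))).resolve_right (hcross j hj)
  · have hjo : j ≠ o := by rintro rfl; exact hof.1 hj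
    exact (hsplit j true hjo ((hpair j).2 (by simp [hj]))).resolve_right (hord j hj)
  · have hjo : j ≠ o := by rintro rfl; exact hot.2.2 hj
    exact (hsplit j false hjo ((hpair j).1 (by simp [hj]))).resolve_left fun hM => hord j hM hj
  · have hjo : j ≠ o := by rintro rfl; exact hof.2 hj
    exact (hsplit j true hjo ((hpair j).2 (by simp [hj]))).resolve_left fun hM => hcross j hM hj

end WellNested

end

section

variable {α : Type*} [DecidableEq α]

theorem stackRun_append (l l' : List (α × Bool)) (s : List α) :
    stackRun (l ++ l') s = (stackRun l s).bind (stackRun l') := by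
  induction l generalizing s with
  | nil => rfl
  | cons e l ih =>
    obtain ⟨o, _ | _⟩ := e
    · cases s with
      | nil => rfl
      | cons t s =>
        by_cases h : t = o <;> simp [stackRun, h, ih]
    · exact ih (o :: s)

theorem exists_split_of_stackRun_cons_eq_nil {l : List (α × Bool)} {o : α} {s : List α}
    (h : stackRun l (o :: s) = some []) :
    ∃ A B, l = A ++ (o, false) :: B ∧ (∀ j, (j, true) ∈ A → (j, false) ∈ A) ∧
      stackRun B s = some [] := by
  induction hn : l.length using Nat.strong_induction_on generalizing l o s with
  | _ n ih =>
  match l, h with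
  | [], h => simp [stackRun] at h
  | (p, false) :: rest, h =>
    have hp : o = p ∧ stackRun rest s = some [] := by simpa [stackRun] using h
    obtain ⟨rfl, hrest⟩ := hp
    exact ⟨[], rest, rfl, by simp, hrest⟩
  | (p, true) :: rest, h =>
    subst hn
    have hrest : stackRun rest (p :: o :: s) = some [] := h
    obtain ⟨A₁, B₁, rfl, hA₁, hB₁⟩ := ih _ (by simp) hrest rfl
    obtain ⟨A₂, B₂, rfl, hA₂, hB₂⟩ := ih _ (by simp; omega) hB₁ rfl
    refine ⟨(p, true) :: A₁ ++ (p, false) :: A₂, B₂, by simp, ?_, hB₂⟩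
    intro j hj
    simp only [List.cons_append, mem_cons, mem_append, Prod.mk.injEq] at hj ⊢
    rcases hj with ⟨rfl, -⟩ | hj | ⟨-, hj⟩ | hj
    · simp
    · simp [hA₁ j hj]
    · simp at hj
    · simp [hA₂ j hj]

theorem not_crossing_of_stackRun_eq_nil {l : List (α × Bool)} {s : List α} (hl : l.Nodup)
    (h : stackRun l s = some []) (i j : α) : ¬Crossing l i j := by
  rintro ⟨hij, hji, hii⟩
  obtain ⟨P, Q, rfl⟩ := append_of_mem (hij.subset (by simp) : (i, true) ∈ _)
  obtain ⟨m, -, hm⟩ := Option.bind_eq_some_iff.1 ((stackRun_append _ _ s).symm.trans h)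
  obtain ⟨A, B, rfl, hA, -⟩ := exists_split_of_stackRun_cons_eq_nil hm
  have hQ : A ++ (i, false) :: B <+ P ++ (i, true) :: (A ++ (i, false) :: B) :=
    (sublist_cons_self _ _).trans (sublist_append_right _ _)
  have hjQ : (j, true) ∈ A ++ (i, false) :: B := by
    have hj : (j, true) ∈ P ++ (i, true) :: (A ++ (i, false) :: B) := hji.subset (by simp)
    rw [mem_append, mem_cons] at hj
    rcases hj with hj | hj | hj
    · exact absurd (pair_sublist_append hj (by simp)) (hl.not_pair_sublist_swap hij)
    · obtain rfl : j = i := by simpa using hj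
      exact absurd hij (nodup_iff_sublist.1 hl _)
    · exact hj
  have hjA : (j, true) ∈ A := by
    rw [mem_append, mem_cons] at hjQ
    rcases hjQ with hj | hj | hj
    · exact hj
    · simp at hj
    · exact absurd ((pair_sublist_append_cons A hj).trans hQ)
        (hl.not_pair_sublist_swap hji)
  exact hl.not_pair_sublist_swap hii
    ((pair_sublist_append (hA j hjA) (by simp)).trans hQ)

theorem WellNested.stackRun_eq {l : List (α × Bool)} (h : WellNested l) (s : List α) :
    stackRun l s = some s := by
  induction hn : l.length using Nat.strong_induction_on generalizing l s with
  | _ n ih =>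
  match l, h with
  | [], _ => rfl
  | (o, false) :: rest, h =>
    have hot : (o, true) ∈ rest := by simpa using (h.pickup_mem_iff o).2 mem_cons_self
    exact absurd (cons_sublist_cons.2 (singleton_sublist.2 hot)) (h.not_delivery_before_pickup o)
  | (o, true) :: rest, h =>
    obtain ⟨M, R, rfl, hM, hR⟩ := h.exists_split
    subst hn
    show stackRun (M ++ (o, false) :: R) (o :: s) = some s
    rw [stackRun_append, ih _ (by simp) hM _ rfl]
    simpa [stackRun] using ih _ (by simp; omega) hR _ rfl

theorem forall_not_crossing_iff {l : List (α × Bool)} (hl : l.Nodup) (hmem : ∀ e, e ∈ l) :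
    (∀ i j : α, l.idxOf (i, true) < l.idxOf (j, true) →
        l.idxOf (i, false) ≤ l.idxOf (j, true) ∨ l.idxOf (j, false) ≤ l.idxOf (i, false)) ↔
      ∀ i j, ¬Crossing l i j := by
  simp only [Crossing, ← hl.idxOf_lt_idxOf_iff (hmem _)]
  exact forall₂_congr fun i j => by omega

end

/-- A route (each order appearing exactly once as a pickup `(o, true)` and
exactly once, later, as a delivery `(o, false)`) satisfies the non-crossing LIFO
condition iff it can be executed by a stack in which each delivery removes exactly the
order currently on top of the stack. -/
theorem stmt_3 {α : Type*} [DecidableEq α] (route : List (α × Bool))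
    (h_pick : ∀ o : α, route.count (o, true) = 1)
    (h_del : ∀ o : α, route.count (o, false) = 1)
    (h_ord : ∀ o : α, route.idxOf (o, true) < route.idxOf (o, false)) :
    (∀ i j : α, route.idxOf (i, true) < route.idxOf (j, true) →
        route.idxOf (i, false) ≤ route.idxOf (j, true) ∨
        route.idxOf (j, false) ≤ route.idxOf (i, false)) ↔
    stackRun route [] = some [] := by
  have hnd : route.Nodup :=
    nodup_iff_count_le_one.2 fun ⟨o, b⟩ => by cases b <;> simp [h_pick, h_del]
  have hmem : ∀ e, e ∈ route :=
    fun ⟨o, b⟩ => count_pos_iff.1 (by cases b <;> simp [h_pick, h_del])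
  rw [forall_not_crossing_iff hnd hmem]
  refine ⟨fun hnc => WellNested.stackRun_eq ⟨hnd, by simp [hmem], fun o hfirst => ?_, hnc⟩ [],
    not_crossing_of_stackRun_eq_nil hnd⟩
  exact lt_asymm (h_ord o) (hnd.idxOf_lt_of_pair_sublist hfirst)
end

section
/- If a route satisfies the LIFO condition, then for every order o, the set of events strictly between o⁺ and o⁻ consists exactly of complete pickup–delivery pairs: every order picked up strictly after o⁺ and before o⁻ is also delivered strictly before o⁻, and every order delivered strictly between o⁺ and o⁻ was picked up strictly after o⁺. -/
/-- If a route satisfies the LIFO condition, then for every order `o` the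
events strictly between `o⁺` and `o⁻` consist exactly of complete pickup–delivery pairs:
every order picked up strictly between `o⁺` and `o⁻` is also delivered strictly in
between, and every order delivered strictly between `o⁺` and `o⁻` was also picked up
strictly in between.  Here `pu o` and `de o` are the positions of `o⁺` and `o⁻`. -/
theorem stmt_4 {α : Type*} (pu de : α → ℕ)
    (h_ord : ∀ o, pu o < de o)
    (h_pu_inj : Function.Injective pu)
    (h_de_inj : Function.Injective de)
    (h_distinct : ∀ o o' : α, pu o ≠ de o')
    (h_lifo : ∀ i j : α, pu i < pu j → de i ≤ pu j ∨ de j ≤ de i) :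
    ∀ o a : α, a ≠ o →
      ((pu o < pu a ∧ pu a < de o) → (pu o < de a ∧ de a < de o)) ∧
      ((pu o < de a ∧ de a < de o) → (pu o < pu a ∧ pu a < de o)) := by
  intro o a hne
  constructor
  · rintro ⟨h1, h2⟩
    rcases h_lifo o a h1 with h | h
    · omega
    · have hde : de a ≠ de o := fun e => hne (h_de_inj e)
      have := h_ord a
      omega
  · rintro ⟨h1, h2⟩
    have hpa := h_ord a
    have hpu : pu a ≠ pu o := fun e => hne (h_pu_inj e)
    rcases lt_or_gt_of_ne hpu with h | h
    · rcases h_lifo a o h with hh | hh <;> omega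
    · omega
end

section
/- Inserting a new order's pickup node immediately followed by its delivery node at any position of a route that satisfies the LIFO condition yields a route that again satisfies the LIFO condition. -/
/-!
Renaming the old orders injectively does not change any position. After the insertion an old
event at position `k` moves to `if k < p then k else k + 2`, a strictly monotone map, so the LIFO
condition between old orders is unchanged; the new order occupies the adjacent positions `p` and
`p + 1`, which no old event occupies, so it cannot interleave with any old order.
-/

/-- The LIFO (non-crossing) condition for a route given as a list of events
`(order, isPickup)`. -/
def LIFOCond {β : Type*} [DecidableEq β] (r : List (β × Bool)) : Prop :=
  ∀ i j : β, r.idxOf (i, true) < r.idxOf (j, true) →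
    r.idxOf (i, false) ≤ r.idxOf (j, true) ∨
    r.idxOf (j, false) ≤ r.idxOf (i, false)

namespace List

variable {γ δ : Type*} [BEq γ] [LawfulBEq γ] [BEq δ] [LawfulBEq δ]

theorem idxOf_map_of_injective {f : γ → δ} (hf : Function.Injective f) (l : List γ) (a : γ) :
    (l.map f).idxOf (f a) = l.idxOf a := by
  induction l with
  | nil => rfl
  | cons b l ih => by_cases h : b = a <;> simp [h, hf.ne, ih]

theorem idxOf_take_append_append_drop {L M : List γ} {x : γ} (hx : x ∉ M) {p : ℕ}
    (hp : p ≤ L.length) :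
    (L.take p ++ M ++ L.drop p).idxOf x =
      if L.idxOf x < p then L.idxOf x else L.idxOf x + M.length := by
  have hsplit : L.idxOf x = (L.take p ++ L.drop p).idxOf x := by rw [take_append_drop]
  by_cases hxp : x ∈ L.take p
  · rw [if_pos ((mem_take_iff_idxOf_lt (mem_of_mem_take hxp)).1 hxp), append_assoc,
      idxOf_append_of_mem hxp]
    exact (L.take_prefix p).idxOf_eq_of_mem hxp
  · rw [append_assoc, idxOf_append_of_notMem hxp, idxOf_append_of_notMem hx, hsplit,
      idxOf_append_of_notMem hxp, length_take_of_le hp, if_neg (by omega)]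
    omega

end List

theorem LIFOCond.map {α β : Type*} [DecidableEq α] [DecidableEq β] {r : List (α × Bool)}
    (h : LIFOCond r) {f : α → β} (hf : Function.Injective f) :
    LIFOCond (r.map fun e => (f e.1, e.2)) := by
  have hidx (o : α) (b : Bool) : (r.map fun e => (f e.1, e.2)).idxOf (f o, b) = r.idxOf (o, b) :=
    List.idxOf_map_of_injective (f := fun e : α × Bool => (f e.1, e.2))
      (fun x y hxy => by
        simp only [Prod.mk.injEq] at hxy
        exact Prod.ext (hf hxy.1) hxy.2) r (o, b)
  -- `idxOf` of an absent element is the junk value `length`, so orders outside the range of `f`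
  -- sit at the end.
  have hout {c : β} (hc : c ∉ Set.range f) (b : Bool) :
      (r.map fun e => (f e.1, e.2)).idxOf (c, b) = r.length := by
    rw [List.idxOf_of_notMem (by simpa using fun o _ ho => hc ⟨o, ho⟩), List.length_map]
  have hle (e : β × Bool) : (r.map fun e => (f e.1, e.2)).idxOf e ≤ r.length := by
    simpa using List.idxOf_le_length (l := r.map fun e => (f e.1, e.2))
  intro i j hij
  by_cases hi : i ∈ Set.range f
  swap
  · exact absurd hij (by rw [hout hi]; exact not_lt.2 (hle _))
  by_cases hj : j ∈ Set.range f
  swap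
  · exact .inl (by rw [hout hj]; exact hle _)
  obtain ⟨a, rfl⟩ := hi
  obtain ⟨b, rfl⟩ := hj
  simp only [hidx] at hij ⊢
  exact h a b hij

theorem LIFOCond.insert_fresh {β : Type*} [DecidableEq β] {r : List (β × Bool)} (h : LIFOCond r)
    {a : β} (hat : (a, true) ∉ r) (haf : (a, false) ∉ r) (p : ℕ) :
    LIFOCond (r.take p ++ [(a, true), (a, false)] ++ r.drop p) := by
  rw [List.take_eq_take_min, List.drop_eq_drop_min]
  set q := min p r.length
  have hq : q ≤ r.length := min_le_right _ _
  have hold {o : β} (ho : o ≠ a) (b : Bool) :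
      (r.take q ++ [(a, true), (a, false)] ++ r.drop q).idxOf (o, b) =
        if r.idxOf (o, b) < q then r.idxOf (o, b) else r.idxOf (o, b) + 2 :=
    List.idxOf_take_append_append_drop (by simp [ho]) hq
  have hnew (b : Bool) :
      (r.take q ++ [(a, true), (a, false)] ++ r.drop q).idxOf (a, b) = if b then q else q + 1 := by
    have hb : (a, b) ∉ r.take q := fun hm => by
      cases b
      exacts [haf (List.mem_of_mem_take hm), hat (List.mem_of_mem_take hm)]
    rw [List.append_assoc, List.idxOf_append_of_notMem hb, List.length_take_of_le hq]
    cases b <;> simp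
  intro i j hij
  by_cases hi : i = a <;> by_cases hj : j = a
  · subst hi hj; exact absurd hij (lt_irrefl _)
  · subst hi; simp only [hnew, hold hj] at hij ⊢; split_ifs at hij ⊢ <;> omega
  · subst hj; simp only [hnew, hold hi] at hij ⊢; split_ifs at hij ⊢ <;> omega
  · simp only [hold hi, hold hj] at hij ⊢
    have hij' : r.idxOf (i, true) < r.idxOf (j, true) := by split_ifs at hij <;> omega
    rcases h i j hij' with h' | h' <;> split_ifs <;> omega

theorem stmt_5_general {α : Type*} [DecidableEq α] (route : List (α × Bool))
    (h_lifo : LIFOCond route)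
    (p : ℕ) :
    LIFOCond ((route.map (fun e => ((some e.1 : Option α), e.2))).take p ++
        [((none : Option α), true), ((none : Option α), false)] ++
        (route.map (fun e => ((some e.1 : Option α), e.2))).drop p) :=
  (h_lifo.map (Option.some_injective α)).insert_fresh (by simp) (by simp) p

/-- Inserting a new order's pickup node immediately followed by its
delivery node at any position `p` of a route satisfying the LIFO condition yields a
route that again satisfies the LIFO condition.  The new order is represented by `none`
in `Option α`, the old orders by `some o`. -/
theorem stmt_5 {α : Type*} [DecidableEq α] (route : List (α × Bool))
    (h_pick : ∀ o : α, route.count (o, true) = 1)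
    (h_del : ∀ o : α, route.count (o, false) = 1)
    (h_ord : ∀ o : α, route.idxOf (o, true) < route.idxOf (o, false))
    (h_lifo : LIFOCond route)
    (p : ℕ) (hp : p ≤ route.length) :
    LIFOCond ((route.map (fun e => ((some e.1 : Option α), e.2))).take p ++
        [((none : Option α), true), ((none : Option α), false)] ++
        (route.map (fun e => ((some e.1 : Option α), e.2))).drop p) :=
  stmt_5_general route h_lifo p
end

section
/- In a route satisfying the LIFO condition, any subsequence from o⁺ to o⁻ of a single order o (a block) is well-formed: every order with at least one event strictly inside this block has both its pickup and its delivery inside the block. -/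
/-- In a route satisfying the LIFO condition, any block (the subsequence
from `o⁺` to `o⁻` of a single order `o`) is well-formed: every order with at least one
event strictly inside this block has both its pickup and its delivery strictly inside
the block.  Here `pu o` and `de o` denote the positions of `o⁺` and `o⁻`. -/
theorem stmt_8 {α : Type*} (pu de : α → ℕ)
    (h_ord : ∀ o, pu o < de o)
    (h_pu_inj : Function.Injective pu)
    (h_de_inj : Function.Injective de)
    (h_distinct : ∀ o o' : α, pu o ≠ de o')
    (h_lifo : ∀ i j : α, pu i < pu j → de i ≤ pu j ∨ de j ≤ de i) :
    ∀ o a : α, a ≠ o →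
      ((pu o < pu a ∧ pu a < de o) ∨ (pu o < de a ∧ de a < de o)) →
      (pu o < pu a ∧ pu a < de o ∧ pu o < de a ∧ de a < de o) := by
  intro o a hne hcase
  have key : pu o < pu a → pu o < pu a ∧ pu a < de o ∧ pu o < de a ∧ de a < de o := by
    intro hpp
    have hda : de a ≤ de o := by
      rcases h_lifo o a hpp with h | h
      · rcases hcase with ⟨_, h2⟩ | ⟨_, h2⟩
        · omega
        · exact le_of_lt h2
      · exact h
    have hda' : de a < de o := lt_of_le_of_ne hda (fun h => hne (h_de_inj h))
    have := h_ord a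
    exact ⟨hpp, by omega, by omega, hda'⟩
  rcases hcase with ⟨h1, _⟩ | ⟨h1, h2⟩
  · exact key h1
  · apply key
    by_contra hle
    have hlt : pu a < pu o := lt_of_le_of_ne (not_lt.mp hle)
      (fun h => hne (h_pu_inj h))
    rcases h_lifo a o hlt with h | h <;> omega
end

section
/- Under the FCFS docking discipline at a factory with c ports, at any time instant the number of vehicles simultaneously in service (between service start and departure) is at most c. -/
/-!
When vehicle `i` starts service, fewer than `c` earlier vehicles occupy a port: either it
starts on arrival, which FCFS allows only in that case, or it starts at the `(i - c)`-th
smallest earlier departure, and at most `c - 1` earlier vehicles depart strictly later.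
Moreover service starts are nondecreasing in arrival order: the first `j < i` with
`b i < b j` cannot have started on arrival, so `c` earlier vehicles depart at or after
`b j`; they started no later than `b i`, hence all occupy a port at `b i`, contradicting
the first fact for `i`. Now if more than `c` vehicles were in service at some time, the
latest-arrived of them would have found the `c` others occupying ports when it started.
-/

open Finset

theorem List.countP_ofFn {n : ℕ} {α : Type*} (f : Fin n → α) (p : α → Prop)
    [DecidablePred p] :
    (List.ofFn f).countP (fun a => decide (p a)) = #{j | p (f j)} := by
  rw [List.ofFn_eq_map, List.countP_map, Fin.univ_def, Finset.card_def, Finset.filter_val,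
    Multiset.filter_coe, Multiset.coe_card, List.countP_eq_length_filter]
  rfl

theorem List.countP_take_ofFn {n : ℕ} {α : Type*} (f : Fin n → α) (p : α → Prop)
    [DecidablePred p] {m : ℕ} (hm : m ≤ n) :
    ((List.ofFn f).take m).countP (fun a => decide (p a)) =
      #{j : Fin n | (j : ℕ) < m ∧ p (f j)} := by
  rw [← Fin.ofFn_take_eq_take_ofFn hm, List.countP_ofFn, ← Finset.card_map (Fin.castLEEmb hm)]
  congr 1
  ext j
  simp only [Finset.mem_map, Finset.mem_filter, Finset.mem_univ, true_and]
  constructor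
  · rintro ⟨a, ha, rfl⟩
    exact ⟨a.isLt, ha⟩
  · rintro ⟨hj, hp⟩
    exact ⟨⟨j, hj⟩, hp, rfl⟩

namespace List.SortedLE

variable {α : Type*} [LinearOrder α] {s : List α}

theorem countP_getD_lt_le (hs : s.SortedLE) (x₀ : α) {p : ℕ} (hp : p < s.length) :
    s.countP (fun a => decide (s.getD p x₀ < a)) ≤ s.length - (p + 1) := by
  rw [List.getD_eq_getElem _ _ hp]
  have hnone : (s.take (p + 1)).countP (fun a => decide (s[p] < a)) = 0 := by
    refine List.countP_eq_zero.2 fun a ha => ?_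
    obtain ⟨q, hq, rfl⟩ := List.mem_take_iff_getElem.1 ha
    simpa using hs.getElem_le_getElem_of_le (by omega : q ≤ p)
  calc s.countP (fun a => decide (s[p] < a))
      = (s.take (p + 1)).countP (fun a => decide (s[p] < a)) +
          (s.drop (p + 1)).countP (fun a => decide (s[p] < a)) := by
        rw [← List.countP_append, List.take_append_drop]
    _ ≤ s.length - (p + 1) := by
        rw [hnone, zero_add, ← List.length_drop]
        exact List.countP_le_length

theorem length_sub_le_countP_getD_le (hs : s.SortedLE) (x₀ : α) (p : ℕ) :
    s.length - p ≤ s.countP (fun a => decide (s.getD p x₀ ≤ a)) := by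
  rcases lt_or_ge p s.length with hp | hp
  · rw [List.getD_eq_getElem _ _ hp]
    have hall : (s.drop p).countP (fun a => decide (s[p] ≤ a)) = s.length - p := by
      rw [List.countP_eq_length.2, List.length_drop]
      intro a ha
      obtain ⟨q, hq, rfl⟩ := List.mem_drop_iff_getElem.1 ha
      simpa using hs.getElem_le_getElem_of_le (by omega : p ≤ p + q)
    calc s.length - p = (s.drop p).countP (fun a => decide (s[p] ≤ a)) := hall.symm
      _ ≤ s.countP (fun a => decide (s[p] ≤ a)) := (List.drop_sublist p s).countP_le
  · omega

end List.SortedLE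

/-- The `p`-th smallest departure (counting from `0`) among vehicles `0, …, m - 1`; junk `0`
when `m ≤ p`. -/
noncomputable def prefixOrderStat {n : ℕ} (d : Fin n → ℝ) (m p : ℕ) : ℝ :=
  (((List.ofFn d).take m).mergeSort (fun a b => decide (a ≤ b))).getD p 0

section prefixOrderStat

variable {n : ℕ} (d : Fin n → ℝ)

theorem card_prefixOrderStat_lt_le (i : Fin n) {p : ℕ} (hp : p < i) :
    #{j | j < i ∧ prefixOrderStat d i p < d j} ≤ i - (p + 1) := by
  have hlen : (((List.ofFn d).take i).mergeSort (fun a b => decide (a ≤ b))).length = i := by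
    simp [i.isLt.le]
  have h := (List.sortedLE_mergeSort (l := (List.ofFn d).take i)).countP_getD_lt_le 0 (hlen ▸ hp)
  rw [(List.mergeSort_perm _ _).countP_eq, List.countP_take_ofFn d _ i.isLt.le, hlen] at h
  exact h

theorem sub_le_card_prefixOrderStat_le (i : Fin n) (p : ℕ) :
    i - p ≤ #{j | j < i ∧ prefixOrderStat d i p ≤ d j} := by
  have hlen : (((List.ofFn d).take i).mergeSort (fun a b => decide (a ≤ b))).length = i := by
    simp [i.isLt.le]
  have h := (List.sortedLE_mergeSort (l := (List.ofFn d).take i)).length_sub_le_countP_getD_le 0 p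
  rw [(List.mergeSort_perm _ _).countP_eq, List.countP_take_ofFn d _ i.isLt.le, hlen] at h
  exact h

end prefixOrderStat

def busyBefore {ι α : Type*} [Fintype ι] [LinearOrder ι] [LinearOrder α] (b d : ι → α) (i : ι)
    (s : α) : Finset ι :=
  {j | j < i ∧ b j ≤ s ∧ s < d j}

theorem card_inService_le_of_monotone {ι α : Type*} [Fintype ι] [LinearOrder ι] [LinearOrder α]
    {b d : ι → α} {c : ℕ} (hb : Monotone b) (hbusy : ∀ i, #(busyBefore b d i (b i)) < c)
    (s : α) : #{i | b i ≤ s ∧ s < d i} ≤ c := by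
  set G : Finset ι := {i | b i ≤ s ∧ s < d i}
  rcases G.eq_empty_or_nonempty with hG | hG
  · simp [hG]
  have hlast := Finset.mem_filter.1 (G.max'_mem hG)
  have hsub : G.erase (G.max' hG) ⊆ busyBefore b d (G.max' hG) (b (G.max' hG)) := by
    intro j hj
    obtain ⟨hne, hjG⟩ := Finset.mem_erase.1 hj
    have hlt : j < G.max' hG := lt_of_le_of_ne (G.le_max' j hjG) hne
    obtain ⟨-, hbj, hdj⟩ := Finset.mem_filter.1 hjG
    exact Finset.mem_filter.2 ⟨Finset.mem_univ _, hlt, hb hlt.le, hlast.2.1.trans_lt hdj⟩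
  have := Finset.card_le_card hsub
  have := hbusy (G.max' hG)
  rw [Finset.card_erase_of_mem (G.max'_mem hG)] at *
  omega

theorem card_busyBefore_le {n : ℕ} {α : Type*} [LinearOrder α] (b d : Fin n → α) (i : Fin n)
    (s : α) : #(busyBefore b d i s) ≤ i := by
  rw [← Fin.card_Iio i]
  exact Finset.card_le_card fun j hj => Finset.mem_Iio.2 (Finset.mem_filter.1 hj).2.1

def IsFCFS {n : ℕ} (c : ℕ) (t b d : Fin n → ℝ) : Prop :=
  ∀ i, b i = if #(busyBefore b d i (t i)) < c then t i else prefixOrderStat d i (i - c)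

namespace IsFCFS

variable {n c : ℕ} {t b d : Fin n → ℝ} {i : Fin n}

theorem card_lt_departure_lt (h : IsFCFS c t b d) (hc : 1 ≤ c)
    (hi : c ≤ #(busyBefore b d i (t i))) : #{j | j < i ∧ b i < d j} < c := by
  have hci : c ≤ i := hi.trans (card_busyBefore_le b d i (t i))
  rw [h i, if_neg hi.not_gt]
  have := card_prefixOrderStat_lt_le d i (p := i - c) (by omega)
  omega

theorem le_card_le_departure (h : IsFCFS c t b d) (hi : c ≤ #(busyBefore b d i (t i))) :
    c ≤ #{j | j < i ∧ b i ≤ d j} := by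
  have hci : c ≤ i := hi.trans (card_busyBefore_le b d i (t i))
  rw [h i, if_neg hi.not_gt]
  have := sub_le_card_prefixOrderStat_le d i (i - c)
  omega

theorem arrival_le_start (h : IsFCFS c t b d) (hc : 1 ≤ c) (i : Fin n) : t i ≤ b i := by
  by_cases hi : #(busyBefore b d i (t i)) < c
  · rw [h i, if_pos hi]
  by_contra! hlt
  have hsub : busyBefore b d i (t i) ⊆ ({j | j < i ∧ b i < d j} : Finset (Fin n)) := by
    intro j hj
    obtain ⟨-, hji, -, hdj⟩ := Finset.mem_filter.1 hj
    exact Finset.mem_filter.2 ⟨Finset.mem_univ _, hji, hlt.trans hdj⟩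
  have := Finset.card_le_card hsub
  have := h.card_lt_departure_lt hc (not_lt.1 hi)
  omega

theorem card_busyBefore_start_lt (h : IsFCFS c t b d) (hc : 1 ≤ c) (i : Fin n) :
    #(busyBefore b d i (b i)) < c := by
  by_cases hi : #(busyBefore b d i (t i)) < c
  · rwa [h i, if_pos hi]
  have hsub : busyBefore b d i (b i) ⊆ ({j | j < i ∧ b i < d j} : Finset (Fin n)) := by
    intro j hj
    obtain ⟨-, hji, -, hdj⟩ := Finset.mem_filter.1 hj
    exact Finset.mem_filter.2 ⟨Finset.mem_univ _, hji, hdj⟩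
  exact (Finset.card_le_card hsub).trans_lt (h.card_lt_departure_lt hc (not_lt.1 hi))

theorem monotone_start (h : IsFCFS c t b d) (hc : 1 ≤ c) (ht : Monotone t) : Monotone b := by
  refine monotone_iff_forall_lt.2 fun j i hji => ?_
  induction j using WellFoundedLT.induction with
  | _ j ih => ?_
  by_cases hj : #(busyBefore b d j (t j)) < c
  · rw [h j, if_pos hj]
    exact (ht hji.le).trans (h.arrival_le_start hc i)
  by_contra! hlt
  have hsub : ({k | k < j ∧ b j ≤ d k} : Finset (Fin n)) ⊆ busyBefore b d i (b i) := by
    intro k hk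
    obtain ⟨-, hkj, hdk⟩ := Finset.mem_filter.1 hk
    exact Finset.mem_filter.2 ⟨Finset.mem_univ _, hkj.trans hji, ih k hkj (hkj.trans hji),
      hlt.trans_le hdk⟩
  have := (h.le_card_le_departure (not_lt.1 hj)).trans (Finset.card_le_card hsub)
  have := h.card_busyBefore_start_lt hc i
  omega

end IsFCFS

theorem stmt_18_general {n : ℕ} (c : ℕ) (hc : 1 ≤ c) (t b d : Fin n → ℝ)
    (h_arr : Monotone t)
    (h_fcfs : ∀ i : Fin n,
      b i = if (Finset.univ.filter fun j : Fin n =>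
              j < i ∧ b j ≤ t i ∧ t i < d j).card < c
            then t i
            else (((List.ofFn d).take i).mergeSort (fun a b => decide (a ≤ b))).getD
                  ((i : ℕ) - c) 0) :
    ∀ time : ℝ,
      (Finset.univ.filter fun i : Fin n => b i ≤ time ∧ time < d i).card ≤ c := by
  have h : IsFCFS c t b d := h_fcfs
  exact card_inService_le_of_monotone (h.monotone_start hc h_arr) (h.card_busyBefore_start_lt hc)

/-- Under the FCFS docking discipline at a factory with `c ≥ 1` ports, at
any time instant the number of vehicles simultaneously in service (on `[b i, d i)`) is
at most `c`.  Vehicle `i` has arrival time `t i` (nondecreasing in `i`), service start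
`b i`, service time `st i > 0` and departure `d i = b i + st i`; FCFS: `b i = t i` if at
time `t i` fewer than `c` earlier-arrived vehicles are in service, and otherwise `b i`
is the `(i - c)`-th smallest (0-based) departure time among the earlier vehicles. -/
theorem stmt_18 {n : ℕ} (c : ℕ) (hc : 1 ≤ c) (t b st d : Fin n → ℝ)
    (h_arr : Monotone t)
    (h_st : ∀ i, 0 < st i)
    (h_dep : ∀ i, d i = b i + st i)
    (h_fcfs : ∀ i : Fin n,
      b i = if (Finset.univ.filter fun j : Fin n =>
              j < i ∧ b j ≤ t i ∧ t i < d j).card < c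
            then t i
            else (((List.ofFn d).take i).mergeSort (fun a b => decide (a ≤ b))).getD
                  ((i : ℕ) - c) 0) :
    ∀ time : ℝ,
      (Finset.univ.filter fun i : Fin n => b i ≤ time ∧ time < d i).card ≤ c :=
  stmt_18_general c hc t b d h_arr h_fcfs
end
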